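/- arXiv:2111.09700 — 7 statements merged into one kernel-verified Lean document; each statement's English description precedes it below -/
import Mathlib

section
/- Let L = ℤ¹⁷ with basis h, e₀, e₁, …, e₁₅, equipped with the symmetric bilinear form ⟨·,·⟩ determined by ⟨h,h⟩ = 1, ⟨eᵢ,eᵢ⟩ = −1 for 0 ≤ i ≤ 15, and all distinct basis vectors pairwise orthogonal. A vector x ∈ L is orthogonal to all eleven vectors h−e₈−e₉, e₈−e₇, e₇−e₆, h, 3h−2e₀−e₁−e₂−e₃−e₄−e₅−e₆−e₇−e₈−e₉, e₁−e₁₀, e₁₀−e₁₁, e₁₁−e₁₂, e₁₂−e₁₃, e₁₃−e₁₄, e₁₄−e₁₅ if and only if its h-coefficient is 0 and, writing x = Σᵢ aᵢeᵢ, the coefficients satisfy: a₁ = a₁₀ = a₁₁ = a₁₂ = a₁₃ = a₁₄ = a₁₅, a₆ = a₇ = a₈ = −a₉, and 2a₀ + a₁ + a₂ + ⋯ + a₉ = 0. -/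
/-- The intersection form of `CP² # 16 (−CP²)` on `ℤ¹⁷`, where index `0` corresponds to the
class `h` (with `⟨h,h⟩ = 1`) and index `i.succ` corresponds to the exceptional class `eᵢ`
(with `⟨eᵢ,eᵢ⟩ = −1`), all basis vectors being pairwise orthogonal. -/
def B17 (x y : Fin 17 → ℤ) : ℤ := x 0 * y 0 - ∑ i : Fin 16, x i.succ * y i.succ

/-- The hyperplane class `h`. -/
def H17 : Fin 17 → ℤ := Pi.single 0 1

/-- The exceptional class `eᵢ`, `0 ≤ i ≤ 15`. -/
def E17 (i : Fin 16) : Fin 17 → ℤ := Pi.single i.succ 1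


private lemma B17_expand (x y : Fin 17 → ℤ) :
    B17 x y = x 0 * y 0 - (x 1 * y 1 + x 2 * y 2 + x 3 * y 3 + x 4 * y 4
    + x 5 * y 5 + x 6 * y 6 + x 7 * y 7 + x 8 * y 8 + x 9 * y 9 + x 10 * y 10 + x 11 * y 11
    + x 12 * y 12 + x 13 * y 13 + x 14 * y 14 + x 15 * y 15 + x 16 * y 16) := by
  simp only [B17, Fin.sum_univ_succ, Fin.sum_univ_zero]
  norm_num [Fin.succ]
  ring_nf
  rfl

set_option maxHeartbeats 2000000 in
/-- A vector `x ∈ ℤ¹⁷` is orthogonal to the eleven classes of the resolution configuration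
complementary to `Z₆` iff its `h`-coefficient vanishes and its `eᵢ`-coefficients `aᵢ`
satisfy `a₁ = a₁₀ = ⋯ = a₁₅`, `a₆ = a₇ = a₈ = −a₉`, and `2a₀ + a₁ + ⋯ + a₉ = 0`.
(Here `aᵢ = x i.succ`.) -/
theorem stmt_6 (x : Fin 17 → ℤ) :
    (B17 x (H17 - E17 8 - E17 9) = 0 ∧
     B17 x (E17 8 - E17 7) = 0 ∧
     B17 x (E17 7 - E17 6) = 0 ∧
     B17 x H17 = 0 ∧
     B17 x ((3 : ℤ) • H17 - (2 : ℤ) • E17 0 - E17 1 - E17 2 - E17 3 - E17 4 - E17 5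
        - E17 6 - E17 7 - E17 8 - E17 9) = 0 ∧
     B17 x (E17 1 - E17 10) = 0 ∧
     B17 x (E17 10 - E17 11) = 0 ∧
     B17 x (E17 11 - E17 12) = 0 ∧
     B17 x (E17 12 - E17 13) = 0 ∧
     B17 x (E17 13 - E17 14) = 0 ∧
     B17 x (E17 14 - E17 15) = 0)
    ↔
    (x 0 = 0 ∧
     x 2 = x 11 ∧ x 11 = x 12 ∧ x 12 = x 13 ∧ x 13 = x 14 ∧ x 14 = x 15 ∧ x 15 = x 16 ∧
     x 7 = x 8 ∧ x 8 = x 9 ∧ x 9 = -x 10 ∧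
     2 * x 1 + x 2 + x 3 + x 4 + x 5 + x 6 + x 7 + x 8 + x 9 + x 10 = 0) := by
  simp only [B17_expand, H17, E17, Pi.sub_apply, Pi.smul_apply, smul_eq_mul]
  simp (config := { decide := true }) [Pi.single_apply]
  omega
end

section
/- In ℤ¹⁶ with coordinates a₀, a₁, …, a₁₅ (corresponding to basis vectors e₀, …, e₁₅), the set of vectors satisfying a₁ = a₁₀ = a₁₁ = a₁₂ = a₁₃ = a₁₄ = a₁₅, a₆ = a₇ = a₈ = −a₉, 2a₀ + a₁ + a₂ + ⋯ + a₉ = 0, and such that exactly one coordinate equals 1 while all remaining coordinates lie in {0, −1}, is exactly the union of the four families: (i) e₀ − e₁ − e₁₀ − e₁₁ − e₁₂ − e₁₃ − e₁₄ − e₁₅ − eᵢ for 2 ≤ i ≤ 5; (ii) e₀ − eᵢ − e_j for 2 ≤ i < j ≤ 5; (iii) eᵢ − e₁ − e₁₀ − e₁₁ − e₁₂ − e₁₃ − e₁₄ − e₁₅ for 2 ≤ i ≤ 5; (iv) eᵢ − e_j for 2 ≤ i, j ≤ 5 with i ≠ j. In particular, with the negative definite form ⟨x,y⟩ = −Σᵢ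 xᵢyᵢ, every such vector v satisfies ⟨v,v⟩ ∈ {−9, −3, −8, −2}. -/
/-- The standard basis vector `eᵢ` of `ℤ¹⁶`. -/
def E16 (i : Fin 16) : Fin 16 → ℤ := Pi.single i 1

/-- The negative definite form `⟨x,y⟩ = −Σᵢ xᵢyᵢ` on `ℤ¹⁶`. -/
def F16 (x y : Fin 16 → ℤ) : ℤ := -∑ i : Fin 16, x i * y i

/-- The four families of classes in the filling `Z₆` representable by symplectic spheres. -/
def Z6classes : Set (Fin 16 → ℤ) :=
  {v | (∃ i : Fin 16, 2 ≤ i ∧ i ≤ 5 ∧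
          v = E16 0 - E16 1 - E16 10 - E16 11 - E16 12 - E16 13 - E16 14 - E16 15 - E16 i) ∨
       (∃ i j : Fin 16, 2 ≤ i ∧ i < j ∧ j ≤ 5 ∧ v = E16 0 - E16 i - E16 j) ∨
       (∃ i : Fin 16, 2 ≤ i ∧ i ≤ 5 ∧
          v = E16 i - E16 1 - E16 10 - E16 11 - E16 12 - E16 13 - E16 14 - E16 15) ∨
       (∃ i j : Fin 16, 2 ≤ i ∧ i ≤ 5 ∧ 2 ≤ j ∧ j ≤ 5 ∧ i ≠ j ∧ v = E16 i - E16 j)}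

/-- The homological conditions cutting out the classes of symplectic spheres in `Z₆`:
the linear constraints from orthogonality to the resolution configuration, together with
the adjunction condition that exactly one coordinate is `1` and all others lie in `{0,−1}`. -/
def Z6cond (x : Fin 16 → ℤ) : Prop :=
  x 1 = x 10 ∧ x 10 = x 11 ∧ x 11 = x 12 ∧ x 12 = x 13 ∧ x 13 = x 14 ∧ x 14 = x 15 ∧
  x 6 = x 7 ∧ x 7 = x 8 ∧ x 8 = -x 9 ∧
  2 * x 0 + x 1 + x 2 + x 3 + x 4 + x 5 + x 6 + x 7 + x 8 + x 9 = 0 ∧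
  (∃ i : Fin 16, x i = 1 ∧ ∀ j : Fin 16, j ≠ i → x j = 0 ∨ x j = -1)

/-- The predicate cutting out `Z6classes`. -/
def Z6Q (v : Fin 16 → ℤ) : Prop :=
  (∃ i : Fin 16, 2 ≤ i ∧ i ≤ 5 ∧
          v = E16 0 - E16 1 - E16 10 - E16 11 - E16 12 - E16 13 - E16 14 - E16 15 - E16 i) ∨
       (∃ i j : Fin 16, 2 ≤ i ∧ i < j ∧ j ≤ 5 ∧ v = E16 0 - E16 i - E16 j) ∨
       (∃ i : Fin 16, 2 ≤ i ∧ i ≤ 5 ∧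
          v = E16 i - E16 1 - E16 10 - E16 11 - E16 12 - E16 13 - E16 14 - E16 15) ∨
       (∃ i j : Fin 16, 2 ≤ i ∧ i ≤ 5 ∧ 2 ≤ j ∧ j ≤ 5 ∧ i ≠ j ∧ v = E16 i - E16 j)

lemma memQ (v : Fin 16 → ℤ) : v ∈ Z6classes ↔ Z6Q v := Iff.rfl

instance : DecidablePred Z6cond := fun x => by unfold Z6cond; infer_instance
instance : DecidablePred Z6Q := fun v => by unfold Z6Q; infer_instance

/-- A vector of `ℤ¹⁶` built from the 7 free parameters (shifted to `Fin 3`). -/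
def mkv (a b c d e f g : Fin 3) : Fin 16 → ℤ :=
  ![(a:ℤ)-1, (b:ℤ)-1, (c:ℤ)-1, (d:ℤ)-1, (e:ℤ)-1, (f:ℤ)-1,
    (g:ℤ)-1, (g:ℤ)-1, (g:ℤ)-1, 1-(g:ℤ),
    (b:ℤ)-1, (b:ℤ)-1, (b:ℤ)-1, (b:ℤ)-1, (b:ℤ)-1, (b:ℤ)-1]

set_option maxRecDepth 100000 in
set_option maxHeartbeats 4000000 in
lemma dec7 : ∀ a b c d e f g : Fin 3,
    Z6cond (mkv a b c d e f g) →
      Z6Q (mkv a b c d e f g) ∧ (F16 (mkv a b c d e f g) (mkv a b c d e f g) = -9 ∨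
        F16 (mkv a b c d e f g) (mkv a b c d e f g) = -3 ∨
        F16 (mkv a b c d e f g) (mkv a b c d e f g) = -8 ∨
        F16 (mkv a b c d e f g) (mkv a b c d e f g) = -2) := by decide

lemma toFin3 (a : ℤ) (h : a = -1 ∨ a = 0 ∨ a = 1) : ∃ b : Fin 3, a = (b : ℤ) - 1 := by
  rcases h with h | h | h
  exacts [⟨0, by rw [h]; decide⟩, ⟨1, by rw [h]; decide⟩, ⟨2, by rw [h]; decide⟩]

lemma toMkv (x : Fin 16 → ℤ) (h : Z6cond x) :
    ∃ a b c d e f g : Fin 3, x = mkv a b c d e f g := by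
  obtain ⟨e1, e2, e3, e4, e5, e6, e7, e8, e9, _, i, hi, hj⟩ := h
  have hb : ∀ k : Fin 16, x k = -1 ∨ x k = 0 ∨ x k = 1 := by
    intro k
    by_cases hk : k = i
    · subst hk; right; right; exact hi
    · rcases hj k hk with h | h
      · exact Or.inr (Or.inl h)
      · exact Or.inl h
  obtain ⟨a, ha⟩ := toFin3 _ (hb 0)
  obtain ⟨b, hbb⟩ := toFin3 _ (hb 1)
  obtain ⟨c, hc⟩ := toFin3 _ (hb 2)
  obtain ⟨d, hd⟩ := toFin3 _ (hb 3)
  obtain ⟨e, he⟩ := toFin3 _ (hb 4)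
  obtain ⟨f, hf⟩ := toFin3 _ (hb 5)
  obtain ⟨g, hg⟩ := toFin3 _ (hb 6)
  have h7 : x 7 = (g : ℤ) - 1 := by rw [← e7]; exact hg
  have h8 : x 8 = (g : ℤ) - 1 := by rw [← e8, ← e7]; exact hg
  have h9 : x 9 = 1 - (g : ℤ) := by linarith
  have h10 : x 10 = (b : ℤ) - 1 := by rw [← e1]; exact hbb
  have h11 : x 11 = (b : ℤ) - 1 := by rw [← e2, ← e1]; exact hbb
  have h12 : x 12 = (b : ℤ) - 1 := by rw [← e3, ← e2, ← e1]; exact hbb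
  have h13 : x 13 = (b : ℤ) - 1 := by rw [← e4, ← e3, ← e2, ← e1]; exact hbb
  have h14 : x 14 = (b : ℤ) - 1 := by rw [← e5, ← e4, ← e3, ← e2, ← e1]; exact hbb
  have h15 : x 15 = (b : ℤ) - 1 := by rw [← e6, ← e5, ← e4, ← e3, ← e2, ← e1]; exact hbb
  refine ⟨a, b, c, d, e, f, g, ?_⟩
  funext k
  fin_cases k
  exacts [ha, hbb, hc, hd, he, hf, hg, h7, h8, h9, h10, h11, h12, h13, h14, h15]

/-- The set of vectors satisfying `Z6cond` is exactly `Z6classes`; in particular every such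
vector has square in `{−9, −3, −8, −2}`. -/
theorem stmt_7 :
    (∀ x : Fin 16 → ℤ, Z6cond x ↔ x ∈ Z6classes) ∧
    (∀ v : Fin 16 → ℤ, Z6cond v →
      F16 v v = -9 ∨ F16 v v = -3 ∨ F16 v v = -8 ∨ F16 v v = -2) := by
  constructor
  · intro x
    constructor
    · intro h
      obtain ⟨a, b, c, d, e, f, g, rfl⟩ := toMkv x h
      exact (memQ _).2 (dec7 a b c d e f g h).1
    · intro hx
      rcases (memQ x).1 hx with ⟨i, h1, h2, rfl⟩ | ⟨i, j, h1, h2, h3, rfl⟩ |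
        ⟨i, h1, h2, rfl⟩ | ⟨i, j, h1, h2, h3, h4, h5, rfl⟩
      · fin_cases i <;> revert h1 h2 <;> decide
      · fin_cases i <;> fin_cases j <;> revert h1 h2 h3 <;> decide
      · fin_cases i <;> revert h1 h2 <;> decide
      · fin_cases i <;> fin_cases j <;> revert h1 h2 h3 h4 h5 <;> decide
  · intro v hv
    obtain ⟨a, b, c, d, e, f, g, rfl⟩ := toMkv v hv
    exact (dec7 a b c d e f g hv).2
end

section
/- Let S ⊂ ℤ¹⁶ be the set consisting of the vectors e₀ − e₁ − e₁₀ − e₁₁ − e₁₂ − e₁₃ − e₁₄ − e₁₅ − eᵢ (2 ≤ i ≤ 5), e₀ − eᵢ − e_j (2 ≤ i < j ≤ 5), eᵢ − e₁ − e₁₀ − e₁₁ − e₁₂ − e₁₃ − e₁₄ − e₁₅ (2 ≤ i ≤ 5), and eᵢ − e_j (2 ≤ i, j ≤ 5, i ≠ j), and equip ℤ¹⁶ with the form ⟨x,y⟩ = −Σᵢ xᵢyᵢ. Then: (a) there is no 6-tuple (v₁,…,v₆) ∈ S⁶ with ⟨v₁,v₁⟩ = −9, ⟨vᵢ,vᵢ⟩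 = −2 for 2 ≤ i ≤ 6, ⟨vᵢ,vᵢ₊₁⟩ = 1 for 1 ≤ i ≤ 5, and ⟨vᵢ,v_j⟩ = 0 whenever |i−j| ≥ 2; (b) there is no 5-tuple (v₁,…,v₅) ∈ S⁵ with ⟨v₁,v₁⟩ = −8, ⟨vᵢ,vᵢ⟩ = −2 for 2 ≤ i ≤ 5, ⟨vᵢ,vᵢ₊₁⟩ = 1 for 1 ≤ i ≤ 4, and ⟨vᵢ,v_j⟩ = 0 whenever |i−j| ≥ 2; (c) there is no 6-tuple (v₁,…,v₆) ∈ S⁶ with self-pairings (⟨v₁,v₁⟩,…,⟨v₆,v₆⟩) = (−2,−8,−2,−2,−2,−3), ⟨vᵢ,vᵢ₊₁⟩ = 1 for 1 ≤ i ≤ 5, and ⟨vᵢ,v_j⟩ = 0 whenever |i−j| ≥ 2. -/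
def zzA (i : Fin 16) : Fin 16 → ℤ :=
  E16 0 - E16 1 - E16 10 - E16 11 - E16 12 - E16 13 - E16 14 - E16 15 - E16 i
def zzB (i j : Fin 16) : Fin 16 → ℤ := E16 0 - E16 i - E16 j
def zzC (i : Fin 16) : Fin 16 → ℤ :=
  E16 i - E16 1 - E16 10 - E16 11 - E16 12 - E16 13 - E16 14 - E16 15
def zzD (a b : Fin 16) : Fin 16 → ℤ := E16 a - E16 b

/-- Explicit enumeration of the 26 elements of `Z6classes`. -/
def zzL : List (Fin 16 → ℤ) :=
  [zzA 2, zzA 3, zzA 4, zzA 5,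
   zzB 2 3, zzB 2 4, zzB 2 5, zzB 3 4, zzB 3 5, zzB 4 5,
   zzC 2, zzC 3, zzC 4, zzC 5,
   zzD 2 3, zzD 2 4, zzD 2 5, zzD 3 2, zzD 3 4, zzD 3 5,
   zzD 4 2, zzD 4 3, zzD 4 5, zzD 5 2, zzD 5 3, zzD 5 4]

set_option maxRecDepth 20000 in
lemma zzmem {v : Fin 16 → ℤ} (h : v ∈ Z6classes) : v ∈ zzL := by
  rcases h with ⟨i, h1, h2, rfl⟩ | ⟨i, j, h1, h2, h3, rfl⟩ | ⟨i, h1, h2, rfl⟩ |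
    ⟨i, j, h1, h2, h3, h4, h5, rfl⟩
  · fin_cases i <;> revert h1 h2 <;> decide
  · fin_cases i <;> fin_cases j <;> revert h1 h2 h3 <;> decide
  · fin_cases i <;> revert h1 h2 <;> decide
  · fin_cases i <;> fin_cases j <;> revert h1 h2 h3 h4 h5 <;> decide

set_option maxRecDepth 20000 in
set_option synthInstance.maxSize 5000 in
set_option synthInstance.maxHeartbeats 2000000 in
set_option maxHeartbeats 4000000 in
lemma zzsearchA : ∀ a ∈ zzL, F16 a a = -9 →
  ∀ b ∈ zzL, F16 b b = -2 → F16 a b = 1 →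
  ∀ c ∈ zzL, F16 c c = -2 → F16 b c = 1 → F16 a c = 0 →
  ∀ d ∈ zzL, F16 d d = -2 → F16 c d = 1 → F16 a d = 0 → F16 b d = 0 →
  ∀ e ∈ zzL, F16 e e = -2 → F16 d e = 1 → F16 a e = 0 → F16 b e = 0 → F16 c e = 0 →
  ∀ f ∈ zzL, F16 f f = -2 → F16 e f = 1 → F16 a f = 0 → F16 b f = 0 → F16 c f = 0 →
    F16 d f = 0 → False := by decide

set_option maxRecDepth 20000 in
set_option synthInstance.maxSize 5000 in
set_option synthInstance.maxHeartbeats 2000000 in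
set_option maxHeartbeats 4000000 in
lemma zzsearchB : ∀ a ∈ zzL, F16 a a = -8 →
  ∀ b ∈ zzL, F16 b b = -2 → F16 a b = 1 →
  ∀ c ∈ zzL, F16 c c = -2 → F16 b c = 1 → F16 a c = 0 →
  ∀ d ∈ zzL, F16 d d = -2 → F16 c d = 1 → F16 a d = 0 → F16 b d = 0 →
  ∀ e ∈ zzL, F16 e e = -2 → F16 d e = 1 → F16 a e = 0 → F16 b e = 0 → F16 c e = 0 →
    False := by decide

set_option maxRecDepth 20000 in
set_option synthInstance.maxSize 5000 in
set_option synthInstance.maxHeartbeats 2000000 in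
set_option maxHeartbeats 4000000 in
lemma zzsearchC : ∀ a ∈ zzL, F16 a a = -2 →
  ∀ b ∈ zzL, F16 b b = -8 → F16 a b = 1 →
  ∀ c ∈ zzL, F16 c c = -2 → F16 b c = 1 → F16 a c = 0 →
  ∀ d ∈ zzL, F16 d d = -2 → F16 c d = 1 → F16 a d = 0 → F16 b d = 0 →
  ∀ e ∈ zzL, F16 e e = -2 → F16 d e = 1 → F16 a e = 0 → F16 b e = 0 → F16 c e = 0 →
  ∀ f ∈ zzL, F16 f f = -3 → F16 e f = 1 → F16 a f = 0 → F16 b f = 0 → F16 c f = 0 →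
    F16 d f = 0 → False := by decide

/-- No chain of classes in `S` realizes the intersection pattern of the linear plumbings
`(−9,−2,−2,−2,−2,−2)`, `(−8,−2,−2,−2,−2)`, or `(−2,−8,−2,−2,−2,−3)`. -/
theorem stmt_8 :
    (¬ ∃ v : Fin 6 → (Fin 16 → ℤ),
        (∀ i, v i ∈ Z6classes) ∧
        F16 (v 0) (v 0) = -9 ∧
        (∀ i : Fin 6, i ≠ 0 → F16 (v i) (v i) = -2) ∧
        (∀ i : Fin 5, F16 (v i.castSucc) (v i.succ) = 1) ∧
        (∀ i j : Fin 6, ((i : ℕ) + 2 ≤ (j : ℕ) ∨ (j : ℕ) + 2 ≤ (i : ℕ)) →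
          F16 (v i) (v j) = 0)) ∧
    (¬ ∃ v : Fin 5 → (Fin 16 → ℤ),
        (∀ i, v i ∈ Z6classes) ∧
        F16 (v 0) (v 0) = -8 ∧
        (∀ i : Fin 5, i ≠ 0 → F16 (v i) (v i) = -2) ∧
        (∀ i : Fin 4, F16 (v i.castSucc) (v i.succ) = 1) ∧
        (∀ i j : Fin 5, ((i : ℕ) + 2 ≤ (j : ℕ) ∨ (j : ℕ) + 2 ≤ (i : ℕ)) →
          F16 (v i) (v j) = 0)) ∧
    (¬ ∃ v : Fin 6 → (Fin 16 → ℤ),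
        (∀ i, v i ∈ Z6classes) ∧
        (∀ i : Fin 6, F16 (v i) (v i) = ![(-2 : ℤ), -8, -2, -2, -2, -3] i) ∧
        (∀ i : Fin 5, F16 (v i.castSucc) (v i.succ) = 1) ∧
        (∀ i j : Fin 6, ((i : ℕ) + 2 ≤ (j : ℕ) ∨ (j : ℕ) + 2 ≤ (i : ℕ)) →
          F16 (v i) (v j) = 0)) := by
  refine ⟨?_, ?_, ?_⟩
  · rintro ⟨v, hmem, h0, hn, hadj, hfar⟩
    exact zzsearchA (v 0) (zzmem (hmem 0)) h0
      (v 1) (zzmem (hmem 1)) (hn 1 (by decide)) (hadj 0)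
      (v 2) (zzmem (hmem 2)) (hn 2 (by decide)) (hadj 1) (hfar 0 2 (by decide))
      (v 3) (zzmem (hmem 3)) (hn 3 (by decide)) (hadj 2) (hfar 0 3 (by decide))
        (hfar 1 3 (by decide))
      (v 4) (zzmem (hmem 4)) (hn 4 (by decide)) (hadj 3) (hfar 0 4 (by decide))
        (hfar 1 4 (by decide)) (hfar 2 4 (by decide))
      (v 5) (zzmem (hmem 5)) (hn 5 (by decide)) (hadj 4) (hfar 0 5 (by decide))
        (hfar 1 5 (by decide)) (hfar 2 5 (by decide)) (hfar 3 5 (by decide))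
  · rintro ⟨v, hmem, h0, hn, hadj, hfar⟩
    exact zzsearchB (v 0) (zzmem (hmem 0)) h0
      (v 1) (zzmem (hmem 1)) (hn 1 (by decide)) (hadj 0)
      (v 2) (zzmem (hmem 2)) (hn 2 (by decide)) (hadj 1) (hfar 0 2 (by decide))
      (v 3) (zzmem (hmem 3)) (hn 3 (by decide)) (hadj 2) (hfar 0 3 (by decide))
        (hfar 1 3 (by decide))
      (v 4) (zzmem (hmem 4)) (hn 4 (by decide)) (hadj 3) (hfar 0 4 (by decide))
        (hfar 1 4 (by decide)) (hfar 2 4 (by decide))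
  · rintro ⟨v, hmem, hn, hadj, hfar⟩
    exact zzsearchC (v 0) (zzmem (hmem 0)) (hn 0)
      (v 1) (zzmem (hmem 1)) (hn 1) (hadj 0)
      (v 2) (zzmem (hmem 2)) (hn 2) (hadj 1) (hfar 0 2 (by decide))
      (v 3) (zzmem (hmem 3)) (hn 3) (hadj 2) (hfar 0 3 (by decide))
        (hfar 1 3 (by decide))
      (v 4) (zzmem (hmem 4)) (hn 4) (hadj 3) (hfar 0 4 (by decide))
        (hfar 1 4 (by decide)) (hfar 2 4 (by decide))
      (v 5) (zzmem (hmem 5)) (hn 5) (hadj 4) (hfar 0 5 (by decide))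
        (hfar 1 5 (by decide)) (hfar 2 5 (by decide)) (hfar 3 5 (by decide))
end

section
/- In ℤ¹⁴ with coordinates a₀, a₁, …, a₁₃ (corresponding to basis vectors e₀, …, e₁₃), the set of vectors satisfying a₁ = a₂ = a₃ = a₄ = a₅ = a₆ = a₁₀, a₁₁ = a₁₂ = a₁₃ = −a₀, 2a₀ + a₁ + a₂ + ⋯ + a₉ = 0, and such that exactly one coordinate equals 1 while all remaining coordinates lie in {0, −1}, is exactly the union of the two families: (i) e₀ − eᵢ − e_j − e₁₁ − e₁₂ − e₁₃ for 7 ≤ i < j ≤ 9; (ii) eᵢ − e_j for 7 ≤ i, j ≤ 9 with i ≠ j. In particular, with the negative definite form ⟨x,y⟩ = −Σᵢ xᵢyᵢ, every such vector v satisfies ⟨v,v⟩ ∈ {−6, −2}. -/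
/-- The standard basis vector `eᵢ` of `ℤ¹⁴`. -/
def E14 (i : Fin 14) : Fin 14 → ℤ := Pi.single i 1

/-- The negative definite form `⟨x,y⟩ = −Σᵢ xᵢyᵢ` on `ℤ¹⁴`. -/
def F14 (x y : Fin 14 → ℤ) : ℤ := -∑ i : Fin 14, x i * y i

/-- The two families of classes in the filling `W₄` representable by symplectic spheres. -/
def W4classes : Set (Fin 14 → ℤ) :=
  {v | (∃ i j : Fin 14, 7 ≤ i ∧ i < j ∧ j ≤ 9 ∧
          v = E14 0 - E14 i - E14 j - E14 11 - E14 12 - E14 13) ∨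
       (∃ i j : Fin 14, 7 ≤ i ∧ i ≤ 9 ∧ 7 ≤ j ∧ j ≤ 9 ∧ i ≠ j ∧ v = E14 i - E14 j)}

/-- The homological conditions cutting out the classes of symplectic spheres in `W₄`. -/
def W4cond (x : Fin 14 → ℤ) : Prop :=
  x 1 = x 2 ∧ x 2 = x 3 ∧ x 3 = x 4 ∧ x 4 = x 5 ∧ x 5 = x 6 ∧ x 6 = x 10 ∧
  x 11 = -x 0 ∧ x 12 = -x 0 ∧ x 13 = -x 0 ∧
  2 * x 0 + x 1 + x 2 + x 3 + x 4 + x 5 + x 6 + x 7 + x 8 + x 9 = 0 ∧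
  (∃ i : Fin 14, x i = 1 ∧ ∀ j : Fin 14, j ≠ i → x j = 0 ∨ x j = -1)

set_option maxHeartbeats 1000000 in
lemma W4forward (x : Fin 14 → ℤ) (h : W4cond x) :
    (∃ i j : Fin 14, 7 ≤ i ∧ i < j ∧ j ≤ 9 ∧
        x = E14 0 - E14 i - E14 j - E14 11 - E14 12 - E14 13) ∨
    (∃ i j : Fin 14, 7 ≤ i ∧ i ≤ 9 ∧ 7 ≤ j ∧ j ≤ 9 ∧ i ≠ j ∧ x = E14 i - E14 j) := by
  obtain ⟨e1,e2,e3,e4,e5,e6,f11,f12,f13,hs,i,hi1,hrest⟩ := h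
  have hall : ∀ j : Fin 14, x j = 1 ∨ x j = 0 ∨ x j = -1 := by
    intro j
    rcases eq_or_ne j i with rfl | hj
    · exact Or.inl hi1
    · rcases hrest j hj with h|h
      · exact Or.inr (Or.inl h)
      · exact Or.inr (Or.inr h)
  have huniq : ∀ j k : Fin 14, j ≠ k → x j = 1 → x k ≠ 1 := by
    intro j k hjk hj hk
    rcases eq_or_ne j i with rfl | hj'
    · rcases hrest k (fun h => hjk h.symm) with h|h <;> omega
    · rcases hrest j hj' with h|h <;> omega
  have notone : ∀ j : Fin 14, x j ≠ 1 → x j = 0 ∨ x j = -1 := by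
    intro j hj; rcases hall j with h|h|h
    · exact absurd h hj
    · exact Or.inl h
    · exact Or.inr h
  have hb : x 1 = 0 ∨ x 1 = -1 :=
    notone 1 (fun h => huniq 1 2 (by decide) h (by omega))
  have ha : x 0 = 1 ∨ x 0 = 0 := by
    rcases hall 0 with h|h|h
    · exact Or.inl h
    · exact Or.inr h
    · exact absurd (show x 12 = 1 by omega) (huniq 11 12 (by decide) (by omega))
  rcases ha with ha | ha
  · -- x 0 = 1
    have hb0 : x 1 = 0 := by
      rcases hb with hb|hb
      · exact hb
      · exfalso
        have h7 : x 7 = 0 ∨ x 7 = -1 := notone 7 (huniq 0 7 (by decide) ha)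
        have h8 : x 8 = 0 ∨ x 8 = -1 := notone 8 (huniq 0 8 (by decide) ha)
        have h9 : x 9 = 0 ∨ x 9 = -1 := notone 9 (huniq 0 9 (by decide) ha)
        rcases h7 with h7|h7 <;> rcases h8 with h8|h8 <;> rcases h9 with h9|h9 <;> omega
    have h7 : x 7 = 0 ∨ x 7 = -1 := notone 7 (huniq 0 7 (by decide) ha)
    have h8 : x 8 = 0 ∨ x 8 = -1 := notone 8 (huniq 0 8 (by decide) ha)
    have h9 : x 9 = 0 ∨ x 9 = -1 := notone 9 (huniq 0 9 (by decide) ha)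
    rcases h7 with h7|h7
    · -- x 7 = 0 : must have x 8 = x 9 = -1
      have h8' : x 8 = -1 := by rcases h8 with h|h <;> rcases h9 with h'|h' <;> omega
      have h9' : x 9 = -1 := by rcases h9 with h|h <;> omega
      exact Or.inl ⟨8, 9, by decide, by decide, by decide,
        by funext k; fin_cases k <;> simp [E14, Pi.single_apply] <;> omega⟩
    · rcases h8 with h8|h8
      · -- x 7 = -1, x 8 = 0, so x 9 = -1
        have h9' : x 9 = -1 := by rcases h9 with h|h <;> omega
        exact Or.inl ⟨7, 9, by decide, by decide, by decide,
          by funext k; fin_cases k <;> simp [E14, Pi.single_apply] <;> omega⟩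
      · -- x 7 = -1, x 8 = -1, so x 9 = 0
        have h9' : x 9 = 0 := by rcases h9 with h|h <;> omega
        exact Or.inl ⟨7, 8, by decide, by decide, by decide,
          by funext k; fin_cases k <;> simp [E14, Pi.single_apply] <;> omega⟩
  · -- x 0 = 0
    have key : x i = x 0 ∨ x i = x 1 ∨ x i = x 2 ∨ x i = x 3 ∨ x i = x 4 ∨ x i = x 5 ∨
        x i = x 6 ∨ x i = x 7 ∨ x i = x 8 ∨ x i = x 9 ∨ x i = x 10 ∨ x i = x 11 ∨
        x i = x 12 ∨ x i = x 13 := by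
      fin_cases i <;> tauto
    have bd7 : x 7 ≤ 1 ∧ -1 ≤ x 7 := by rcases hall 7 with h|h|h <;> omega
    have bd8 : x 8 ≤ 1 ∧ -1 ≤ x 8 := by rcases hall 8 with h|h|h <;> omega
    have bd9 : x 9 ≤ 1 ∧ -1 ≤ x 9 := by rcases hall 9 with h|h|h <;> omega
    have hb0 : x 1 = 0 := by rcases hb with h|h <;> omega
    have h1or : x 7 = 1 ∨ x 8 = 1 ∨ x 9 = 1 := by
      rcases key with h|h|h|h|h|h|h|h|h|h|h|h|h|h <;> omega
    rcases h1or with h1|h1|h1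
    · have p8 : x 8 = 0 ∨ x 8 = -1 := notone 8 (huniq 7 8 (by decide) h1)
      have p9 : x 9 = 0 ∨ x 9 = -1 := notone 9 (huniq 7 9 (by decide) h1)
      rcases p8 with p8|p8
      · have p9' : x 9 = -1 := by rcases p9 with h|h <;> omega
        exact Or.inr ⟨7, 9, by decide, by decide, by decide, by decide, by decide,
          by funext k; fin_cases k <;> simp [E14, Pi.single_apply] <;> omega⟩
      · have p9' : x 9 = 0 := by rcases p9 with h|h <;> omega
        exact Or.inr ⟨7, 8, by decide, by decide, by decide, by decide, by decide,
          by funext k; fin_cases k <;> simp [E14, Pi.single_apply] <;> omega⟩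
    · have p7 : x 7 = 0 ∨ x 7 = -1 := notone 7 (huniq 8 7 (by decide) h1)
      have p9 : x 9 = 0 ∨ x 9 = -1 := notone 9 (huniq 8 9 (by decide) h1)
      rcases p7 with p7|p7
      · have p9' : x 9 = -1 := by rcases p9 with h|h <;> omega
        exact Or.inr ⟨8, 9, by decide, by decide, by decide, by decide, by decide,
          by funext k; fin_cases k <;> simp [E14, Pi.single_apply] <;> omega⟩
      · have p9' : x 9 = 0 := by rcases p9 with h|h <;> omega
        exact Or.inr ⟨8, 7, by decide, by decide, by decide, by decide, by decide,
          by funext k; fin_cases k <;> simp [E14, Pi.single_apply] <;> omega⟩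
    · have p7 : x 7 = 0 ∨ x 7 = -1 := notone 7 (huniq 9 7 (by decide) h1)
      have p8 : x 8 = 0 ∨ x 8 = -1 := notone 8 (huniq 9 8 (by decide) h1)
      rcases p7 with p7|p7
      · have p8' : x 8 = -1 := by rcases p8 with h|h <;> omega
        exact Or.inr ⟨9, 8, by decide, by decide, by decide, by decide, by decide,
          by funext k; fin_cases k <;> simp [E14, Pi.single_apply] <;> omega⟩
      · have p8' : x 8 = 0 := by rcases p8 with h|h <;> omega
        exact Or.inr ⟨9, 7, by decide, by decide, by decide, by decide, by decide,
          by funext k; fin_cases k <;> simp [E14, Pi.single_apply] <;> omega⟩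

lemma W4case1 (i j : Fin 14) (hi : 7 ≤ i) (hij : i < j) (hj : j ≤ 9) :
    (i = 7 ∧ j = 8) ∨ (i = 7 ∧ j = 9) ∨ (i = 8 ∧ j = 9) := by
  have v7 : ((7:Fin 14)).val = 7 := rfl
  have v8 : ((8:Fin 14)).val = 8 := rfl
  have v9 : ((9:Fin 14)).val = 9 := rfl
  rw [Fin.le_def] at hi hj
  rw [Fin.lt_def] at hij
  rcases Nat.lt_or_ge i.val 8 with h|h
  · rcases Nat.lt_or_ge j.val 9 with h'|h'
    · exact Or.inl ⟨Fin.ext (by omega), Fin.ext (by omega)⟩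
    · exact Or.inr (Or.inl ⟨Fin.ext (by omega), Fin.ext (by omega)⟩)
  · exact Or.inr (Or.inr ⟨Fin.ext (by omega), Fin.ext (by omega)⟩)

lemma W4case2 (i : Fin 14) (hi1 : 7 ≤ i) (hi2 : i ≤ 9) : i = 7 ∨ i = 8 ∨ i = 9 := by
  have v7 : ((7:Fin 14)).val = 7 := rfl
  have v9 : ((9:Fin 14)).val = 9 := rfl
  rw [Fin.le_def] at hi1 hi2
  rcases Nat.lt_or_ge i.val 8 with h|h
  · exact Or.inl (Fin.ext (by omega))
  · rcases Nat.lt_or_ge i.val 9 with h'|h'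
    · exact Or.inr (Or.inl (Fin.ext (by omega)))
    · exact Or.inr (Or.inr (Fin.ext (by omega)))

set_option maxHeartbeats 1000000 in
/-- The set of vectors satisfying `W4cond` is exactly `W4classes`; in particular every such
vector has square in `{−6, −2}`. -/
theorem stmt_12 :
    (∀ x : Fin 14 → ℤ, W4cond x ↔ x ∈ W4classes) ∧
    (∀ v : Fin 14 → ℤ, W4cond v → F14 v v = -6 ∨ F14 v v = -2) := by
  have back : ∀ x : Fin 14 → ℤ, x ∈ W4classes → W4cond x := by
    rintro x (⟨i,j,hi,hij,hj,rfl⟩ | ⟨i,j,hi1,hi2,hj1,hj2,hne,rfl⟩)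
    · rcases W4case1 i j hi hij hj with ⟨rfl,rfl⟩|⟨rfl,rfl⟩|⟨rfl,rfl⟩ <;>
        (unfold W4cond; decide)
    · rcases W4case2 i hi1 hi2 with rfl|rfl|rfl <;> rcases W4case2 j hj1 hj2 with rfl|rfl|rfl <;>
        first
          | exact absurd rfl hne
          | (unfold W4cond; decide)
  refine ⟨fun x => ⟨fun h => W4forward x h, back x⟩, fun v hv => ?_⟩
  rcases W4forward v hv with ⟨i,j,hi,hij,hj,rfl⟩ | ⟨i,j,hi1,hi2,hj1,hj2,hne,rfl⟩
  · rcases W4case1 i j hi hij hj with ⟨rfl,rfl⟩|⟨rfl,rfl⟩|⟨rfl,rfl⟩ <;>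
      (left; unfold F14; decide)
  · rcases W4case2 i hi1 hi2 with rfl|rfl|rfl <;> rcases W4case2 j hj1 hj2 with rfl|rfl|rfl <;>
      first
        | exact absurd rfl hne
        | (right; unfold F14; decide)
end

section
/- In ℤ¹¹ with coordinates a₀, a₁, …, a₁₀, the set of vectors satisfying a₁ = a₂ = a₃ = a₄ = a₅ = a₆ = a₁₀, a₇ = a₈ = a₉ = 0, and 2a₀ + a₁ + a₂ + ⋯ + a₉ = 0 is exactly the set of integer multiples of the vector (3, −1, −1, −1, −1, −1, −1, 0, 0, 0, −1) (i.e., 3e₀ − e₁ − ⋯ − e₆ − e₁₀). This generator satisfies Σᵢ aᵢ² = 16; consequently, no vector in this set satisfies Σᵢ aᵢ² = 4. -/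
/-- The generator `3e₀ − e₁ − ⋯ − e₆ − e₁₀` of the second homology lattice of `W₁`. -/
def genW1 : Fin 11 → ℤ := ![3, -1, -1, -1, -1, -1, -1, 0, 0, 0, -1]

/-- The linear conditions cutting out the second homology lattice of `W₁` in `ℤ¹¹`. -/
def W1cond (x : Fin 11 → ℤ) : Prop :=
  x 1 = x 2 ∧ x 2 = x 3 ∧ x 3 = x 4 ∧ x 4 = x 5 ∧ x 5 = x 6 ∧ x 6 = x 10 ∧
  x 7 = 0 ∧ x 8 = 0 ∧ x 9 = 0 ∧
  2 * x 0 + x 1 + x 2 + x 3 + x 4 + x 5 + x 6 + x 7 + x 8 + x 9 = 0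

lemma g0 : genW1 0 = (3:ℤ) := by decide
lemma g1 : genW1 1 = (-1:ℤ) := by decide
lemma g2 : genW1 2 = (-1:ℤ) := by decide
lemma g3 : genW1 3 = (-1:ℤ) := by decide
lemma g4 : genW1 4 = (-1:ℤ) := by decide
lemma g5 : genW1 5 = (-1:ℤ) := by decide
lemma g6 : genW1 6 = (-1:ℤ) := by decide
lemma g7 : genW1 7 = (0:ℤ) := by decide
lemma g8 : genW1 8 = (0:ℤ) := by decide
lemma g9 : genW1 9 = (0:ℤ) := by decide
lemma g10 : genW1 10 = (-1:ℤ) := by decide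

lemma W1iff (x : Fin 11 → ℤ) : W1cond x ↔ ∃ n : ℤ, x = n • genW1 := by
  constructor
  · rintro ⟨h1, h2, h3, h4, h5, h6, h7, h8, h9, h0⟩
    refine ⟨-x 1, ?_⟩
    funext i
    fin_cases i <;> simp [g0,g1,g2,g3,g4,g5,g6,g7,g8,g9,g10] <;> omega
  · rintro ⟨n, rfl⟩
    refine ⟨?_, ?_, ?_, ?_, ?_, ?_, ?_, ?_, ?_, ?_⟩ <;> simp [g0,g1,g2,g3,g4,g5,g6,g7,g8,g9,g10] <;> ring

/-- The solutions of `W1cond` are exactly the integer multiples of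
`3e₀ − e₁ − ⋯ − e₆ − e₁₀`; this generator has `Σ aᵢ² = 16`, and consequently no solution
has `Σ aᵢ² = 4`. -/
theorem stmt_13 :
    (∀ x : Fin 11 → ℤ, W1cond x ↔ ∃ n : ℤ, x = n • genW1) ∧
    (∑ i : Fin 11, genW1 i ^ 2 = 16) ∧
    (¬ ∃ x : Fin 11 → ℤ, W1cond x ∧ ∑ i : Fin 11, x i ^ 2 = 4) := by
  refine ⟨W1iff, by decide, ?_⟩
  rintro ⟨x, hc, hs⟩
  obtain ⟨n, rfl⟩ := (W1iff x).mp hc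
  have hg : ∑ i : Fin 11, genW1 i ^ 2 = 16 := by decide
  have : ∑ i : Fin 11, (n • genW1) i ^ 2 = 16 * n ^ 2 := by
    calc ∑ i : Fin 11, (n • genW1) i ^ 2 = n ^ 2 * ∑ i : Fin 11, genW1 i ^ 2 := by
          rw [Finset.mul_sum]
          exact Finset.sum_congr rfl fun i _ => by simp [mul_pow]
      _ = 16 * n ^ 2 := by rw [hg]; ring
  rw [this] at hs
  generalize n ^ 2 = m at hs
  omega
end

section
/- Let L = ℤ⁹ with basis h, e₀, e₁, …, e₇, equipped with the symmetric bilinear form ⟨·,·⟩ determined by ⟨h,h⟩ = 1, ⟨eᵢ,eᵢ⟩ = −1 for 0 ≤ i ≤ 7, and all distinct basis vectors pairwise orthogonal. The set of vectors in L orthogonal to all eight vectors h, 3h − 2e₀ − e₁ − e₂ − e₃ − e₄ − e₅ − e₆, e₁ − e₇, e₂ − e₁, e₃ − e₂, e₄ − e₃, e₅ − e₄, e₆ − e₅ is exactly the set of integer multiples of w = 3e₀ − e₁ − e₂ − e₃ − e₄ − e₅ − e₆ − e₇. Moreover ⟨w,w⟩ = −16; consequently, no vector in this orthogonal complement has self-pairing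 −4. -/
/-- The intersection form of `CP² # 8 (−CP²)` on `ℤ⁹`, where index `0` corresponds to the
class `h` (with `⟨h,h⟩ = 1`) and index `i.succ` corresponds to the exceptional class `eᵢ`
(with `⟨eᵢ,eᵢ⟩ = −1`), all basis vectors being pairwise orthogonal. -/
def B9 (x y : Fin 9 → ℤ) : ℤ := x 0 * y 0 - ∑ i : Fin 8, x i.succ * y i.succ

/-- The hyperplane class `h`. -/
def H9 : Fin 9 → ℤ := Pi.single 0 1

/-- The exceptional class `eᵢ`, `0 ≤ i ≤ 7`. -/
def E9 (i : Fin 8) : Fin 9 → ℤ := Pi.single i.succ 1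

/-- The class `w = 3e₀ − e₁ − e₂ − e₃ − e₄ − e₅ − e₆ − e₇`. -/
def wV1 : Fin 9 → ℤ :=
  (3 : ℤ) • E9 0 - E9 1 - E9 2 - E9 3 - E9 4 - E9 5 - E9 6 - E9 7

/-- Orthogonality to the eight classes of the resolution configuration complementary
to the filling `V₁`. -/
def V1orth (x : Fin 9 → ℤ) : Prop :=
  B9 x H9 = 0 ∧
  B9 x ((3 : ℤ) • H9 - (2 : ℤ) • E9 0 - E9 1 - E9 2 - E9 3 - E9 4 - E9 5 - E9 6) = 0 ∧
  B9 x (E9 1 - E9 7) = 0 ∧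
  B9 x (E9 2 - E9 1) = 0 ∧
  B9 x (E9 3 - E9 2) = 0 ∧
  B9 x (E9 4 - E9 3) = 0 ∧
  B9 x (E9 5 - E9 4) = 0 ∧
  B9 x (E9 6 - E9 5) = 0

/-!
Pairing with `h` reads off the `h`-coordinate and pairing with `eᵢ` gives minus the `eᵢ`-coordinate,
so the eight orthogonality conditions become linear equations: the `h`-coordinate vanishes, the
chain `e₁ − e₇, e₂ − e₁, …, e₆ − e₅` forces the coordinates along `e₁, …, e₇` to be one common
value `c`, and the cubic class then forces the `e₀`-coordinate to be `−3c`. Hence the complement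
is `ℤ w`, and `⟨n w, n w⟩ = −16 n²` is never `−4`.
-/

lemma B9_comm (x y : Fin 9 → ℤ) : B9 x y = B9 y x := by
  simp only [B9, mul_comm]

lemma B9_sub_right (x y z : Fin 9 → ℤ) : B9 x (y - z) = B9 x y - B9 x z := by
  simp only [B9, Pi.sub_apply, mul_sub, Finset.sum_sub_distrib]
  ring

lemma B9_smul_right (c : ℤ) (x y : Fin 9 → ℤ) : B9 x (c • y) = c * B9 x y := by
  simp only [B9, Pi.smul_apply, smul_eq_mul, mul_sub, Finset.mul_sum]
  ring_nf

lemma B9_smul_smul (c : ℤ) (x : Fin 9 → ℤ) : B9 (c • x) (c • x) = c ^ 2 * B9 x x := by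
  rw [B9_smul_right, B9_comm, B9_smul_right]
  ring

lemma B9_H9_right (x : Fin 9 → ℤ) : B9 x H9 = x 0 := by
  simp [B9, H9, Fin.succ_ne_zero]

lemma B9_E9_right (x : Fin 9 → ℤ) (i : Fin 8) : B9 x (E9 i) = -x i.succ := by
  simp [B9, E9, Pi.single_apply, (Fin.succ_ne_zero i).symm]

lemma V1orth_iff (x : Fin 9 → ℤ) : V1orth x ↔
    x 0 = 0 ∧ 3 * x 0 + 2 * x 1 + x 2 + x 3 + x 4 + x 5 + x 6 + x 7 = 0 ∧
      x 8 = x 2 ∧ x 2 = x 3 ∧ x 3 = x 4 ∧ x 4 = x 5 ∧ x 5 = x 6 ∧ x 6 = x 7 := by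
  simp only [V1orth, B9_sub_right, B9_smul_right, B9_H9_right, B9_E9_right, Fin.reduceSucc]
  constructor <;> rintro ⟨h₁, h₂, h₃, h₄, h₅, h₆, h₇, h₈⟩ <;>
    exact ⟨by omega, by omega, by omega, by omega, by omega, by omega, by omega, by omega⟩

lemma eq_smul_wV1_iff (x : Fin 9 → ℤ) (n : ℤ) : x = n • wV1 ↔
    x 0 = 0 ∧ x 1 = 3 * n ∧ x 2 = -n ∧ x 3 = -n ∧ x 4 = -n ∧ x 5 = -n ∧ x 6 = -n ∧
      x 7 = -n ∧ x 8 = -n := by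
  simp [funext_iff, Fin.forall_fin_succ, wV1, E9, Pi.single_apply, mul_comm]

lemma B9_wV1_wV1 : B9 wV1 wV1 = -16 := by decide

lemma V1orth_iff_exists_eq_smul_wV1 (x : Fin 9 → ℤ) : V1orth x ↔ ∃ n : ℤ, x = n • wV1 := by
  simp only [V1orth_iff, eq_smul_wV1_iff]
  constructor
  · intro hx
    exact ⟨-x 8, by omega⟩
  · rintro ⟨n, hx⟩
    omega

lemma not_V1orth_of_B9_self_eq_neg_four {x : Fin 9 → ℤ} (hx : B9 x x = -4) : ¬ V1orth x := by
  rw [V1orth_iff_exists_eq_smul_wV1]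
  rintro ⟨n, rfl⟩
  rw [B9_smul_smul, B9_wV1_wV1] at hx
  omega

/-- The orthogonal complement of the eight listed classes is exactly the set of integer
multiples of `w`; moreover `⟨w,w⟩ = −16`, and consequently no vector in the orthogonal
complement has self-pairing `−4`. -/
theorem stmt_14 :
    (∀ x : Fin 9 → ℤ, V1orth x ↔ ∃ n : ℤ, x = n • wV1) ∧
    B9 wV1 wV1 = -16 ∧
    (¬ ∃ x : Fin 9 → ℤ, V1orth x ∧ B9 x x = -4) :=
  ⟨V1orth_iff_exists_eq_smul_wV1, B9_wV1_wV1,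
    fun ⟨_, hx, hself⟩ => not_V1orth_of_B9_self_eq_neg_four hself hx⟩
end

section
/- Let ℓ ≥ 2 and N ≥ 2ℓ + 2 be integers. There is no vector v = (v₁, …, v_N) ∈ ℤᴺ with all of the following properties: exactly one coordinate of v equals 1, and its index is different from ℓ+2; exactly ℓ coordinates of v equal −1; all remaining coordinates of v equal 0; v_k = v_{k+1} for every k ∈ {1, …, ℓ} ∪ {ℓ+2, …, 2ℓ}; and v_{ℓ+2} − v_{ℓ+1} = 1. -/
/-- Let `ℓ ≥ 2` and `N ≥ 2ℓ + 2`. There is no vector `v ∈ ℤᴺ` (with coordinates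
`v 1, …, v N`) such that: exactly one coordinate equals `1`, at an index different from
`ℓ+2`; exactly `ℓ` coordinates equal `−1`; all remaining coordinates equal `0`;
`v k = v (k+1)` for every `k ∈ {1,…,ℓ} ∪ {ℓ+2,…,2ℓ}`; and `v (ℓ+2) − v (ℓ+1) = 1`. -/
theorem stmt_15 (ℓ N : ℕ) (hℓ : 2 ≤ ℓ) (hN : 2 * ℓ + 2 ≤ N) :
    ¬ ∃ v : ℕ → ℤ,
      (∃ i ∈ Finset.Icc 1 N, v i = 1 ∧ i ≠ ℓ + 2 ∧
        ∀ j ∈ Finset.Icc 1 N, j ≠ i → v j = 0 ∨ v j = -1) ∧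
      ((Finset.Icc 1 N).filter (fun k => v k = -1)).card = ℓ ∧
      (∀ k ∈ Finset.Icc 1 ℓ ∪ Finset.Icc (ℓ + 2) (2 * ℓ), v k = v (k + 1)) ∧
      v (ℓ + 2) - v (ℓ + 1) = 1 := by
  rintro ⟨v, ⟨i, hi, hvi, hine, h0⟩, hcard, hchain, hstep⟩
  simp only [Finset.mem_Icc] at hi
  -- v is constant on 1..ℓ+1
  have hconst : ∀ m, m ≤ ℓ → v (1 + m) = v 1 := by
    intro m hm
    induction m with
    | zero => rfl
    | succ n ih =>
      have h1 : v (1 + n) = v (1 + n + 1) := by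
        apply hchain
        simp only [Finset.mem_union, Finset.mem_Icc]
        left; omega
      have : 1 + (n + 1) = 1 + n + 1 := by omega
      rw [this, ← h1, ih (by omega)]
  have hL1 : v (ℓ + 1) = v 1 := by
    have := hconst ℓ le_rfl
    rwa [Nat.add_comm 1 ℓ] at this
  -- v (ℓ+2) ∈ {0, -1}
  have hL2 : v (ℓ + 2) = 0 ∨ v (ℓ + 2) = -1 := by
    apply h0
    · simp only [Finset.mem_Icc]; omega
    · omega
  -- v (ℓ+1) is not 1 (else v (ℓ+2) = 2)
  have hv1 : v 1 = -1 := by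
    rcases hL2 with h | h
    · -- v(ℓ+1) = -1
      omega
    · -- v(ℓ+2) = -1 so v(ℓ+1) = -2, but v(ℓ+1) ∈ {1,0,-1}
      exfalso
      have : v (ℓ + 1) = -2 := by omega
      by_cases hli : ℓ + 1 = i
      · rw [hli] at this; omega
      · have := h0 (ℓ + 1) (by simp only [Finset.mem_Icc]; omega) hli
        omega
  -- then indices 1..ℓ+1 all have v = -1, so at least ℓ+1 coords equal -1
  have hsub : Finset.Icc 1 (ℓ + 1) ⊆ (Finset.Icc 1 N).filter (fun k => v k = -1) := by
    intro k hk
    simp only [Finset.mem_Icc] at hk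
    simp only [Finset.mem_filter, Finset.mem_Icc]
    refine ⟨⟨hk.1, by omega⟩, ?_⟩
    have := hconst (k - 1) (by omega)
    have hk1 : 1 + (k - 1) = k := by omega
    rw [hk1] at this
    rw [this, hv1]
  have hle := Finset.card_le_card hsub
  rw [hcard, Nat.card_Icc] at hle
  omega
end
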